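/- Let h be a continuous complex-valued function on ℝ^n of polynomial growth, meaning |h(x)| ≤ C(1 + |x|^m) for some C ≥ 0, some nonnegative integer m, and all x ∈ ℝ^n, and suppose h is harmonic in the sense of tempered distributions: ∫_{ℝ^n} h(x) Δφ(x) dx = 0 for all φ ∈ 𝒮(ℝ^n), where Δ = Σ_{j=1}^n ∂²/∂x_j². Let λ be the tempered distribution λ(φ) = ∫_{ℝ^n} φ(x) h(x) dx, and let λ̂ be its Fourier transform, defined by λ̂(φ) = λ(φ̂). Then λ̂ is supported at the origin, i.e., λ̂(φ) = 0 for every φ ∈ 𝒮(ℝ^n) vanishing on an open neighborhood of 0. -/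

import Mathlib

/-!
If `φ` vanishes near `0`, then `φ = ‖ξ‖² • g` for a Schwartz function `g`: divide `φ` by a smooth
function that is bounded below and agrees with `‖ξ‖²` off a small ball. The Fourier transform
turns multiplication by `-(2π)² ‖ξ‖²` into the Laplacian, so `𝓕 φ = Δ ψ` with
`ψ = 𝓕 (-(2π)⁻² • g)`, and harmonicity of `h` gives `∫ 𝓕 φ * h = ∫ h * Δ ψ = 0`.
-/

open MeasureTheory

/-- The partial derivative of `f` in the `i`-th coordinate direction. -/
noncomputable def pderivI (n : ℕ) (i : Fin n)
    (f : EuclideanSpace ℝ (Fin n) → ℂ) : EuclideanSpace ℝ (Fin n) → ℂ :=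
  fun x => fderiv ℝ f x (EuclideanSpace.single i 1)

open SchwartzMap LineDeriv Laplacian FourierTransform Real

theorem norm_iteratedFDerivWithin_inv_Ioi_le {ε : ℝ} (hε : 0 < ε) (n : ℕ) {y : ℝ}
    (hy : y ∈ Set.Ioi ε) :
    ‖iteratedFDerivWithin ℝ n Inv.inv (Set.Ioi ε) y‖ ≤ n.factorial * ε⁻¹ ^ (n + 1) := by
  have hy0 : 0 < y := hε.trans hy
  rw [iteratedFDerivWithin_of_isOpen n isOpen_Ioi hy, norm_iteratedFDeriv_eq_norm_iteratedDeriv,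
    iteratedDeriv_eq_iterate, iter_deriv_inv,
    show (-1 - n : ℤ) = -((n + 1 : ℕ) : ℤ) by push_cast; ring, zpow_neg, zpow_natCast, ← inv_pow]
  simp only [norm_mul, norm_pow, norm_neg, norm_one, one_pow, one_mul, Real.norm_natCast,
    norm_inv, Real.norm_of_nonneg hy0.le]
  gcongr
  exact hy.le

theorem Function.HasTemperateGrowth.inv {E : Type*} [NormedAddCommGroup E] [NormedSpace ℝ E]
    {f : E → ℝ} (hf : f.HasTemperateGrowth) {δ : ℝ} (hδ : 0 < δ) (hfδ : ∀ x, δ ≤ f x) :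
    (fun x ↦ (f x)⁻¹).HasTemperateGrowth := by
  have hε : 0 < δ / 2 := half_pos hδ
  refine hf.comp' (g := Inv.inv) (t := Set.Ioi (δ / 2)) ?_ isOpen_Ioi.uniqueDiffOn
    ((contDiffOn_inv ℝ).mono fun y hy ↦ (hε.trans hy).ne') fun N ↦ ?_
  · rintro - ⟨x, rfl⟩
    exact (half_lt_self hδ).trans_le (hfδ x)
  refine ⟨0, ∑ i ∈ Finset.range (N + 1), i.factorial * (δ / 2)⁻¹ ^ (i + 1), by positivity,
    fun n hn y hy ↦ ?_⟩
  rw [pow_zero, mul_one]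
  exact (norm_iteratedFDerivWithin_inv_Ioi_le hε n hy).trans <|
    Finset.single_le_sum (f := fun i : ℕ ↦ (i.factorial : ℝ) * (δ / 2)⁻¹ ^ (i + 1))
      (fun i _ ↦ by positivity) (Finset.mem_range.2 (Nat.lt_succ_of_le hn))

namespace SchwartzMap

variable {V : Type*} [NormedAddCommGroup V] [InnerProductSpace ℝ V] [FiniteDimensional ℝ V]

theorem exists_smulLeftCLM_norm_sq_eq {F : Type*} [NormedAddCommGroup F] [NormedSpace ℝ F]
    (φ : 𝓢(V, F)) {r : ℝ} (hr : 0 < r) (hφ : ∀ x ∈ Metric.ball 0 r, φ x = 0) :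
    ∃ g : 𝓢(V, F), smulLeftCLM F (fun x : V ↦ ‖x‖ ^ 2) g = φ := by
  let β : ContDiffBump (0 : V) := ⟨r / 2, r, half_pos hr, half_lt_self hr⟩
  let q : V → ℝ := fun x ↦ ‖x‖ ^ 2 + β x
  have hq : q.HasTemperateGrowth := (Function.hasTemperateGrowth_norm_sq V).add
    (β.hasCompactSupport.hasTemperateGrowth β.contDiff)
  have hq_ge (x : V) : min 1 ((r / 2) ^ 2) ≤ q x := by
    rcases le_or_gt ‖x‖ (r / 2) with hx | hx
    · have : β x = 1 := β.one_of_mem_closedBall (by simpa using hx)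
      have := sq_nonneg ‖x‖
      simp only [q]
      linarith [min_le_left 1 ((r / 2) ^ 2)]
    · have := β.nonneg (x := x)
      have : (r / 2) ^ 2 ≤ ‖x‖ ^ 2 := pow_le_pow_left₀ (by positivity) hx.le 2
      simp only [q]
      linarith [min_le_right 1 ((r / 2) ^ 2)]
  have hq_inv := hq.inv (lt_min one_pos (by positivity)) hq_ge
  refine ⟨smulLeftCLM F (fun x ↦ (q x)⁻¹) φ, ?_⟩
  ext x
  rw [smulLeftCLM_apply_apply (Function.hasTemperateGrowth_norm_sq V),
    smulLeftCLM_apply_apply hq_inv, smul_smul]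
  rcases lt_or_ge ‖x‖ r with hx | hx
  · simp [hφ x (by simpa using hx)]
  · have hβ : β x = 0 := β.zero_of_le_dist (by simpa using hx)
    have hx0 : ‖x‖ ^ 2 ≠ 0 := pow_ne_zero 2 (hr.trans_le hx).ne'
    simp [q, hβ, hx0]

variable [MeasurableSpace V] [BorelSpace V] {E : Type*} [NormedAddCommGroup E] [NormedSpace ℂ E]

theorem laplacian_fourier_eq (f : 𝓢(V, E)) :
    Δ (𝓕 f) = -(2 * π) ^ 2 • 𝓕 (smulLeftCLM E (fun x : V ↦ ‖x‖ ^ 2) f) := by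
  let b := stdOrthonormalBasis ℝ V
  have hsq : ∀ i ∈ Finset.univ, (inner ℝ · (b i) ^ 2).HasTemperateGrowth := by fun_prop
  simp_rw [laplacian_eq_sum b, lineDerivOp_fourier_eq, ← b.sum_sq_inner_left,
    smulLeftCLM_sum hsq, sum_apply, fourier_sum, Finset.smul_sum]
  refine Finset.sum_congr rfl fun i hi ↦ ?_
  rw [← fourier_smul]
  congr 1
  ext x
  have hinner : (inner ℝ · (b i)).HasTemperateGrowth := by fun_prop
  simp only [smul_apply, smulLeftCLM_apply_apply hinner, smulLeftCLM_apply_apply (hsq i hi),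
    ← Complex.coe_smul, smul_smul]
  congr 1
  push_cast
  linear_combination (4 * (π : ℂ) ^ 2 * (inner ℝ x (b i) : ℂ) ^ 2) * Complex.I_sq

end SchwartzMap

theorem sum_pderivI_pderivI_eq_laplacian {n : ℕ} (f : 𝓢(EuclideanSpace ℝ (Fin n), ℂ))
    (x : EuclideanSpace ℝ (Fin n)) :
    ∑ j, pderivI n j (pderivI n j f) x = Δ f x := by
  have hpderiv (j : Fin n) (g : 𝓢(EuclideanSpace ℝ (Fin n), ℂ)) :
      pderivI n j g = ⇑(∂_{EuclideanSpace.single j (1 : ℝ)} g : 𝓢(EuclideanSpace ℝ (Fin n), ℂ)) :=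
    funext fun y ↦ (lineDerivOp_apply_eq_fderiv _ g y).symm
  simp [laplacian_eq_sum (EuclideanSpace.basisFun (Fin n) ℝ), hpderiv, sum_apply]

theorem stmt8_general (n : ℕ) (h : EuclideanSpace ℝ (Fin n) → ℂ)
    (hharm : ∀ φ : SchwartzMap (EuclideanSpace ℝ (Fin n)) ℂ,
      ∫ x : EuclideanSpace ℝ (Fin n),
        h x * ∑ j : Fin n, pderivI n j (pderivI n j (⇑φ)) x = 0) :
    ∀ φ : SchwartzMap (EuclideanSpace ℝ (Fin n)) ℂ,
      (∃ U : Set (EuclideanSpace ℝ (Fin n)), IsOpen U ∧ (0 : EuclideanSpace ℝ (Fin n)) ∈ U ∧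
        ∀ x ∈ U, φ x = 0) →
      ∫ x : EuclideanSpace ℝ (Fin n), FourierTransform.fourier (⇑φ : EuclideanSpace ℝ (Fin n) → ℂ) x * h x = 0 := by
  rintro φ ⟨U, hU, hU0, hφU⟩
  obtain ⟨r, hr, hball⟩ := Metric.isOpen_iff.1 hU 0 hU0
  obtain ⟨g, hg⟩ := φ.exists_smulLeftCLM_norm_sq_eq hr fun x hx ↦ hφU x (hball hx)
  set ψ : 𝓢(EuclideanSpace ℝ (Fin n), ℂ) := 𝓕 ((-(2 * π) ^ 2)⁻¹ • g)
  have hψ : Δ ψ = 𝓕 φ := by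
    have hc : -(2 * π) ^ 2 ≠ 0 := neg_ne_zero.2 (by positivity)
    rw [laplacian_fourier_eq, map_smul, hg, fourier_smul, smul_smul, mul_inv_cancel₀ hc,
      one_smul]
  simpa [sum_pderivI_pderivI_eq_laplacian, hψ, fourier_coe, mul_comm] using hharm ψ

/-- If `h` is a continuous function of polynomial growth which is harmonic in the sense of
tempered distributions, then the Fourier transform of the tempered distribution defined by `h`
is supported at the origin. -/
theorem stmt8 (n : ℕ) (h : EuclideanSpace ℝ (Fin n) → ℂ)
    (hcont : Continuous h) (C : ℝ) (hC : 0 ≤ C) (m : ℕ)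
    (hgrowth : ∀ x : EuclideanSpace ℝ (Fin n), ‖h x‖ ≤ C * (1 + ‖x‖ ^ m))
    (hharm : ∀ φ : SchwartzMap (EuclideanSpace ℝ (Fin n)) ℂ,
      ∫ x : EuclideanSpace ℝ (Fin n),
        h x * ∑ j : Fin n, pderivI n j (pderivI n j (⇑φ)) x = 0) :
    ∀ φ : SchwartzMap (EuclideanSpace ℝ (Fin n)) ℂ,
      (∃ U : Set (EuclideanSpace ℝ (Fin n)), IsOpen U ∧ (0 : EuclideanSpace ℝ (Fin n)) ∈ U ∧
        ∀ x ∈ U, φ x = 0) →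
      ∫ x : EuclideanSpace ℝ (Fin n), FourierTransform.fourier (⇑φ : EuclideanSpace ℝ (Fin n) → ℂ) x * h x = 0 :=
  stmt8_general n h hharm
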